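/- (Equation (BNZ2)) For every GPOVM M and every g : G, the Bayes risk is invariant under twisting: D_bayes (M_g) = D_bayes M. -/

import Mathlib

open MeasureTheory
open scoped Kronecker Matrix ComplexOrder

noncomputable section

namespace GroupEstimation

variable {G : Type} [Group G] [TopologicalSpace G] [IsTopologicalGroup G]
  [CompactSpace G] [T2Space G] [MeasurableSpace G] [BorelSpace G]

/-- Vectorization of a square matrix. -/
def vec {d : ℕ} (A : Matrix (Fin d) (Fin d) ℂ) : EuclideanSpace ℂ (Fin d × Fin d) :=
  WithLp.toLp 2 (fun p => A p.1 p.2)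

/-- The rank-one state `|f(g)⟩⟩⟨⟨f(g)|`. -/
def rho {d : ℕ} (f : G → Matrix (Fin d) (Fin d) ℂ) (g : G) :
    Matrix (Fin d × Fin d) (Fin d × Fin d) ℂ :=
  fun p q => f g p.1 p.2 * star (f g q.1 q.2)

/-- `A g = f g ⊗ₖ 1`. -/
def Amat {d : ℕ} (f : G → Matrix (Fin d) (Fin d) ℂ) (g : G) :
    Matrix (Fin d × Fin d) (Fin d × Fin d) ℂ :=
  f g ⊗ₖ (1 : Matrix (Fin d) (Fin d) ℂ)

/-- The average state `ρμ` (entrywise Bochner integral). -/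
def rhoMu (μ : Measure G) {d : ℕ} (f : G → Matrix (Fin d) (Fin d) ℂ) :
    Matrix (Fin d × Fin d) (Fin d × Fin d) ℂ :=
  fun p q => ∫ g, rho f g p q ∂μ

/-- positivity, vanishing at ∅ and countable additivity (the "measure part" of a GPOVM). -/
def IsPreGPOVM {d : ℕ} (M : Set G → Matrix (Fin d × Fin d) (Fin d × Fin d) ℂ) : Prop :=
  (∀ B : Set G, MeasurableSet B → (M B).PosSemidef) ∧ M ∅ = 0 ∧
    ∀ B : ℕ → Set G, (∀ j, MeasurableSet (B j)) → Pairwise (Function.onFun Disjoint B) →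
      M (⋃ j, B j) = ∑' j, M (B j)

/-- Generalized POVM. -/
def IsGPOVM (μ : Measure G) {d : ℕ} (f : G → Matrix (Fin d) (Fin d) ℂ)
    (M : Set G → Matrix (Fin d × Fin d) (Fin d × Fin d) ℂ) : Prop :=
  IsPreGPOVM M ∧ (M Set.univ * rhoMu μ f).trace = 1

/-- Covariance of a GPOVM. -/
def IsCovariant {d : ℕ} (f : G → Matrix (Fin d) (Fin d) ℂ)
    (M : Set G → Matrix (Fin d × Fin d) (Fin d × Fin d) ℂ) : Prop :=
  ∀ (g : G) (B : Set G), MeasurableSet B →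
    M ((g * ·) '' B) = Amat f g * M B * (Amat f g)ᴴ

/-- The covariant GPOVM with seed `T`. -/
def MT (μ : Measure G) {d : ℕ} (f : G → Matrix (Fin d) (Fin d) ℂ)
    (T : Matrix (Fin d × Fin d) (Fin d × Fin d) ℂ) (B : Set G) :
    Matrix (Fin d × Fin d) (Fin d × Fin d) ℂ :=
  fun p q => ∫ g in B, (Amat f g * T * (Amat f g)ᴴ) p q ∂μ

/-- Pointwise risk. -/
def Dpt {d : ℕ} (w : G → G → ℝ)
    (ν : (Set G → Matrix (Fin d × Fin d) (Fin d × Fin d) ℂ) → G → Measure G)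
    (M : Set G → Matrix (Fin d × Fin d) (Fin d × Fin d) ℂ) (g : G) : ℝ :=
  ∫ gh, w g gh ∂(ν M g)

/-- Bayes risk. -/
def Dbayes (μ : Measure G) {d : ℕ} (w : G → G → ℝ)
    (ν : (Set G → Matrix (Fin d × Fin d) (Fin d × Fin d) ℂ) → G → Measure G)
    (M : Set G → Matrix (Fin d × Fin d) (Fin d × Fin d) ℂ) : ℝ :=
  ∫ g, Dpt w ν M g ∂μ

/-- Minimax risk. -/
def Dmax {d : ℕ} (w : G → G → ℝ)
    (ν : (Set G → Matrix (Fin d × Fin d) (Fin d × Fin d) ℂ) → G → Measure G)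
    (M : Set G → Matrix (Fin d × Fin d) (Fin d × Fin d) ℂ) : ℝ :=
  ⨆ g : G, Dpt w ν M g

/-- Twisted GPOVM `M_g`. -/
def twist {d : ℕ} (f : G → Matrix (Fin d) (Fin d) ℂ)
    (M : Set G → Matrix (Fin d × Fin d) (Fin d × Fin d) ℂ) (g : G) (B : Set G) :
    Matrix (Fin d × Fin d) (Fin d × Fin d) ℂ :=
  (Amat f g)ᴴ * M ((g * ·) '' B) * Amat f g

/-- Matrix of the orthogonal projection onto span {v g}. -/
def P0 {d : ℕ} (f : G → Matrix (Fin d) (Fin d) ℂ) :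
    Matrix (Fin d × Fin d) (Fin d × Fin d) ℂ :=
  Matrix.toEuclideanLin.symm
    ((Submodule.span ℂ (Set.range fun g => vec (f g))).subtype ∘ₗ
      (Submodule.orthogonalProjectionOnto (Submodule.span ℂ (Set.range fun g => vec (f g)))).toLinearMap)

end GroupEstimation

/-! Twisting by `g` conjugates `M (g • B)` by the unitary `A g`, and `A g` moves the state at `h`
to the state at `g * h`: it maps `vec (f h)` to `vec (f g * f h)`, which is `vec (f (g * h))` up
to a phase that the rank-one projection `ρ` does not see. So the outcome distribution of `M_g` at
`h` is that of `M` at `g * h`, translated by `g⁻¹`; covariance of `w` gives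
`D_pt M_g h = D_pt M (g * h)`, and left invariance of Haar measure finishes the proof. -/

namespace Matrix

theorem mul_vecMulVec_star_mul_conjTranspose {m n α : Type*} [Fintype n]
    [CommSemiring α] [StarRing α] (A : Matrix m n α) (x : n → α) :
    A * vecMulVec x (star x) * Aᴴ = vecMulVec (A *ᵥ x) (star (A *ᵥ x)) := by
  rw [mul_vecMulVec, vecMulVec_mul, star_mulVec]

theorem vecMulVec_smul_star_smul {n 𝕜 : Type*} [RCLike 𝕜] {c : 𝕜} (hc : ‖c‖ = 1)
    (x : n → 𝕜) : vecMulVec (c • x) (star (c • x)) = vecMulVec x (star x) := by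
  rw [star_smul, smul_vecMulVec, vecMulVec_smul, smul_smul, RCLike.star_def,
    RCLike.mul_conj, hc]
  simp

theorem kronecker_one_mulVec_vec_transpose {l m n α : Type*} [Fintype m] [Fintype n]
    [DecidableEq n] [CommSemiring α] (B : Matrix l m α) (X : Matrix m n α) :
    (B ⊗ₖ (1 : Matrix n n α)) *ᵥ vec Xᵀ = vec (B * X)ᵀ := by
  rw [kronecker_mulVec_vec, Matrix.one_mul, transpose_mul]

theorem conjTranspose_mul_tsum_mul {ι n α : Type*} [Fintype n] [DecidableEq n]
    [CommRing α] [StarRing α] [TopologicalSpace α] [IsTopologicalRing α] [T2Space α]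
    {U : Matrix n n α} (hU : U ∈ unitaryGroup n α) (X : ι → Matrix n n α) :
    Uᴴ * (∑' j, X j) * U = ∑' j, Uᴴ * X j * U :=
  Function.LeftInverse.map_tsum X
    (g := (AddMonoidHom.mulRight U).comp (AddMonoidHom.mulLeft Uᴴ))
    ((continuous_const.mul continuous_id).mul continuous_const)
    (g' := fun Y => U * Y * Uᴴ) ((continuous_const.mul continuous_id).mul continuous_const)
    fun Y => by
      have hUU : U * Uᴴ = 1 := mem_unitaryGroup_iff.mp hU
      simp only [AddMonoidHom.coe_comp, Function.comp_apply, AddMonoidHom.coe_mulLeft,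
        AddMonoidHom.coe_mulRight, ← mul_assoc, hUU, one_mul]
      rw [mul_assoc, hUU, mul_one]

end Matrix

namespace GroupEstimation

section

variable {G : Type} {d : ℕ} {f : G → Matrix (Fin d) (Fin d) ℂ}

-- `Matrix.vec` stacks columns, so the row-major `vec` of `f g` is `Matrix.vec (f g)ᵀ`.
theorem rho_eq_vecMulVec (g : G) :
    rho f g = Matrix.vecMulVec (Matrix.vec (f g)ᵀ) (star (Matrix.vec (f g)ᵀ)) := rfl

theorem Amat_mem_unitaryGroup {g : G} (hf : f g ∈ Matrix.unitaryGroup (Fin d) ℂ) :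
    Amat f g ∈ Matrix.unitaryGroup (Fin d × Fin d) ℂ :=
  Matrix.kronecker_mem_unitary hf (one_mem _)

variable [Group G]

theorem Amat_mul_rho_mul_conjTranspose {g h : G} {c : ℂ} (hc : ‖c‖ = 1)
    (hfgh : f (g * h) = c • (f g * f h)) :
    Amat f g * rho f h * (Amat f g)ᴴ = rho f (g * h) := by
  rw [rho_eq_vecMulVec, Matrix.mul_vecMulVec_star_mul_conjTranspose, Amat,
    Matrix.kronecker_one_mulVec_vec_transpose, rho_eq_vecMulVec, hfgh, Matrix.transpose_smul,
    Matrix.vec_smul, Matrix.vecMulVec_smul_star_smul hc]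

theorem trace_twist_mul_rho {g h : G} {c : ℂ} (hc : ‖c‖ = 1)
    (hfgh : f (g * h) = c • (f g * f h))
    (M : Set G → Matrix (Fin d × Fin d) (Fin d × Fin d) ℂ) (B : Set G) :
    (twist f M g B * rho f h).trace = (M ((g * ·) '' B) * rho f (g * h)).trace := by
  rw [twist, mul_assoc ((Amat f g)ᴴ * M ((g * ·) '' B)), mul_assoc (Amat f g)ᴴ,
    Matrix.trace_mul_comm, mul_assoc, Amat_mul_rho_mul_conjTranspose hc hfgh]

variable [MeasurableSpace G] [MeasurableMul G]

theorem isPreGPOVM_twist {M : Set G → Matrix (Fin d × Fin d) (Fin d × Fin d) ℂ}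
    (hM : IsPreGPOVM M) {g : G} (hfg : f g ∈ Matrix.unitaryGroup (Fin d) ℂ) :
    IsPreGPOVM (twist f M g) := by
  obtain ⟨hpos, hempty, hadd⟩ := hM
  refine ⟨fun B hB => ?_, by simp [twist, hempty], fun B hB hdisj => ?_⟩
  · exact (hpos _ (hB.const_smul g)).conjTranspose_mul_mul_same (Amat f g)
  · rw [twist, Set.image_iUnion, hadd (fun j => (g * ·) '' B j) (fun j => (hB j).const_smul g)
      fun i j hij => (Set.disjoint_image_iff (mul_right_injective g)).2 (hdisj hij)]
    exact Matrix.conjTranspose_mul_tsum_mul (Amat_mem_unitaryGroup hfg) _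

variable {ν : (Set G → Matrix (Fin d × Fin d) (Fin d × Fin d) ℂ) → G → Measure G}

theorem measure_twist_eq_map
    (hν : ∀ M : Set G → Matrix (Fin d × Fin d) (Fin d × Fin d) ℂ, IsPreGPOVM M →
      ∀ (g : G) (B : Set G), MeasurableSet B →
        ν M g B = ENNReal.ofReal ((M B * rho f g).trace).re)
    {M : Set G → Matrix (Fin d × Fin d) (Fin d × Fin d) ℂ} (hM : IsPreGPOVM M)
    {g h : G} (hfg : f g ∈ Matrix.unitaryGroup (Fin d) ℂ) {c : ℂ} (hc : ‖c‖ = 1)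
    (hfgh : f (g * h) = c • (f g * f h)) :
    ν (twist f M g) h = (ν M (g * h)).map (MeasurableEquiv.mulLeft g⁻¹) := by
  ext B hB
  rw [MeasurableEquiv.map_apply, MeasurableEquiv.coe_mulLeft, ← Set.image_mul_left,
    hν _ (isPreGPOVM_twist hM hfg) h B hB, hν _ hM (g * h) ((g * ·) '' B) (hB.const_smul g),
    trace_twist_mul_rho hc hfgh]

theorem Dpt_twist
    (hν : ∀ M : Set G → Matrix (Fin d × Fin d) (Fin d × Fin d) ℂ, IsPreGPOVM M →
      ∀ (g : G) (B : Set G), MeasurableSet B →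
        ν M g B = ENNReal.ofReal ((M B * rho f g).trace).re)
    {M : Set G → Matrix (Fin d × Fin d) (Fin d × Fin d) ℂ} (hM : IsPreGPOVM M)
    {g h : G} (hfg : f g ∈ Matrix.unitaryGroup (Fin d) ℂ) {c : ℂ} (hc : ‖c‖ = 1)
    (hfgh : f (g * h) = c • (f g * f h)) {w : G → G → ℝ}
    (hw_cov : ∀ g gh g' : G, w (g' * g) (g' * gh) = w g gh) :
    Dpt w ν (twist f M g) h = Dpt w ν M (g * h) := by
  rw [Dpt, measure_twist_eq_map hν hM hfg hc hfgh, integral_map_equiv, Dpt]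
  congr 1 with x
  rw [MeasurableEquiv.coe_mulLeft, ← hw_cov h _ g, mul_inv_cancel_left]

end

theorem Dbayes_twist_general
    {G : Type} [Group G] [TopologicalSpace G] [IsTopologicalGroup G]
    [MeasurableSpace G] [BorelSpace G]
    (μ : Measure G) [μ.IsHaarMeasure]
    {d : ℕ} (f : G → Matrix (Fin d) (Fin d) ℂ)
    (hf_unitary : ∀ g : G, f g ∈ Matrix.unitaryGroup (Fin d) ℂ)
    (c : G → G → ℂ) (hc_norm : ∀ g h : G, ‖c g h‖ = 1)
    (hc_proj : ∀ g h : G, f (g * h) = c g h • (f g * f h))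
    (w : G → G → ℝ)
    (hw_cov : ∀ g gh g' : G, w (g' * g) (g' * gh) = w g gh)
    (ν : (Set G → Matrix (Fin d × Fin d) (Fin d × Fin d) ℂ) → G → Measure G)
    (hν : ∀ M : Set G → Matrix (Fin d × Fin d) (Fin d × Fin d) ℂ, IsPreGPOVM M →
      ∀ (g : G) (B : Set G), MeasurableSet B →
        ν M g B = ENNReal.ofReal ((M B * rho f g).trace).re)
    (M : Set G → Matrix (Fin d × Fin d) (Fin d × Fin d) ℂ)
    (hM : IsGPOVM μ f M) (g : G) :
    Dbayes μ w ν (twist f M g) = Dbayes μ w ν M := by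
  simp_rw [Dbayes, Dpt_twist hν hM.1 (hf_unitary g) (hc_norm g _) (hc_proj g _) hw_cov]
  exact integral_mul_left_eq_self (Dpt w ν M) g

/-- Equation (BNZ2): the Bayes risk is invariant under twisting. -/
theorem Dbayes_twist
    {G : Type} [Group G] [TopologicalSpace G] [IsTopologicalGroup G]
    [CompactSpace G] [T2Space G] [MeasurableSpace G] [BorelSpace G]
    (μ : Measure G) [μ.IsHaarMeasure] [IsProbabilityMeasure μ]
    {d : ℕ} (hd : 0 < d) (f : G → Matrix (Fin d) (Fin d) ℂ)
    (hf_cont : Continuous f) (hf_one : f 1 = 1)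
    (hf_unitary : ∀ g : G, f g ∈ Matrix.unitaryGroup (Fin d) ℂ)
    (c : G → G → ℂ) (hc_norm : ∀ g h : G, ‖c g h‖ = 1)
    (hc_proj : ∀ g h : G, f (g * h) = c g h • (f g * f h))
    (w : G → G → ℝ) (hw_cont : Continuous fun p : G × G => w p.1 p.2)
    (hw_bdd : ∃ C : ℝ, ∀ g gh : G, |w g gh| ≤ C)
    (hw_cov : ∀ g gh g' : G, w (g' * g) (g' * gh) = w g gh)
    (ν : (Set G → Matrix (Fin d × Fin d) (Fin d × Fin d) ℂ) → G → Measure G)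
    (hν : ∀ M : Set G → Matrix (Fin d × Fin d) (Fin d × Fin d) ℂ, IsPreGPOVM M →
      ∀ (g : G) (B : Set G), MeasurableSet B →
        ν M g B = ENNReal.ofReal ((M B * rho f g).trace).re)
    (M : Set G → Matrix (Fin d × Fin d) (Fin d × Fin d) ℂ)
    (hM : IsGPOVM μ f M) (g : G) :
    Dbayes μ w ν (twist f M g) = Dbayes μ w ν M :=
  Dbayes_twist_general μ f hf_unitary c hc_norm hc_proj w hw_cov ν hν M hM g

end GroupEstimation
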